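/- Let K be a field and let φ be a z-automorphism of the free associative algebra K⟨x,y,z⟩ which is linear in x and y. Then the automorphism of the polynomial algebra K[x,y,z] induced by φ via the abelianization homomorphism K⟨x,y,z⟩ → K[x,y,z] is a tame automorphism of K[x,y,z]. -/

import Mathlib

noncomputable section

open FreeAlgebra MvPolynomial

variable (K : Type*) [Field K]

/-- Affine automorphisms of `K[x,y,z]`. -/
def IsAffine3 (φ : MvPolynomial (Fin 3) K ≃ₐ[K] MvPolynomial (Fin 3) K) : Prop :=
  ∃ (a : Matrix (Fin 3) (Fin 3) K) (b : Fin 3 → K),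
    IsUnit a.det ∧ ∀ j, φ (X j) = (∑ i, C (a i j) * X i) + C (b j)

/-- Triangular automorphisms of `K[x,y,z]`. -/
def IsTriangular3 (φ : MvPolynomial (Fin 3) K ≃ₐ[K] MvPolynomial (Fin 3) K) : Prop :=
  ∃ (α₁ α₂ α₃ : Kˣ) (p₁ : MvPolynomial (Fin 2) K) (p₂ : Polynomial K) (β : K),
    φ (X 0) = C (α₁ : K) * X 0 + aeval ![X 1, X 2] p₁ ∧
    φ (X 1) = C (α₂ : K) * X 1 + Polynomial.aeval (X 2) p₂ ∧
    φ (X 2) = C (α₃ : K) * X 2 + C β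

/-- The subgroup of tame automorphisms of `K[x,y,z]`. -/
def Tame3 : Subgroup (MvPolynomial (Fin 3) K ≃ₐ[K] MvPolynomial (Fin 3) K) :=
  Subgroup.closure {φ | IsAffine3 K φ ∨ IsTriangular3 K φ}

/-- The element `Σ αᵢⱼ zⁱxzʲ + Σ βᵢⱼ zⁱyzʲ` of `K⟨x,y,z⟩` associated with the pair of
polynomials `p = Σ αᵢⱼ z₁ⁱz₂ʲ` and `q = Σ βᵢⱼ z₁ⁱz₂ʲ` in `K[z₁,z₂]`. -/
def linF (p q : MvPolynomial (Fin 2) K) : FreeAlgebra K (Fin 3) :=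
  (∑ m ∈ p.support, p.coeff m •
    (ι K (2 : Fin 3) ^ m 0 * ι K (0 : Fin 3) * ι K (2 : Fin 3) ^ m 1)) +
  (∑ m ∈ q.support, q.coeff m •
    (ι K (2 : Fin 3) ^ m 0 * ι K (1 : Fin 3) * ι K (2 : Fin 3) ^ m 1))

/-- The abelianization homomorphism `K⟨x,y,z⟩ → K[x,y,z]`. -/
def abel3 : FreeAlgebra K (Fin 3) →ₐ[K] MvPolynomial (Fin 3) K :=
  FreeAlgebra.lift K (fun i => MvPolynomial.X i)


/-!
Abelianization turns `zⁱxzʲ` into `zⁱ⁺ʲx`, so the induced automorphism `ψ` of `K[x,y,z]` is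
`x ↦ a x + b y`, `y ↦ c x + d y`, `z ↦ z` with `a, b, c, d ∈ K[z]`. Differentiating
`ψ (ψ⁻¹ x) = x` and `ψ (ψ⁻¹ y) = y` with respect to `x` and `y` and then setting `x = y = 0`
exhibits a left inverse of `((a, b), (c, d))` over `K[z]`, so `ad - bc` is a unit.
Euclid's algorithm on `(a, c)`, realised by composing with the transvections
`x ↦ x + g(z) y` and the swap `x ↔ y`, reduces `ψ` to the case `c = 0`, where it is triangular.
-/

namespace FreeAlgebra

variable {R σ : Type*} [CommSemiring R]

def abelianizeHom (φ : FreeAlgebra R σ →ₐ[R] FreeAlgebra R σ) :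
    MvPolynomial σ R →ₐ[R] MvPolynomial σ R :=
  aeval fun i => lift R X (φ (ι R i))

theorem abelianizeHom_X (φ : FreeAlgebra R σ →ₐ[R] FreeAlgebra R σ) (i : σ) :
    abelianizeHom φ (X i) = lift R X (φ (ι R i)) :=
  aeval_X _ _

theorem abelianizeHom_comp_lift (φ : FreeAlgebra R σ →ₐ[R] FreeAlgebra R σ) :
    (abelianizeHom φ).comp (lift R X) = (lift R X).comp φ :=
  hom_ext <| funext fun i => by simp [abelianizeHom_X]

theorem abelianizeHom_comp (φ ψ : FreeAlgebra R σ →ₐ[R] FreeAlgebra R σ) :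
    abelianizeHom (φ.comp ψ) = (abelianizeHom φ).comp (abelianizeHom ψ) :=
  MvPolynomial.algHom_ext fun i => by
    simp [abelianizeHom_X, ← AlgHom.comp_apply (abelianizeHom φ), abelianizeHom_comp_lift]

theorem abelianizeHom_id : abelianizeHom (AlgHom.id R (FreeAlgebra R σ)) = AlgHom.id R _ :=
  MvPolynomial.algHom_ext fun i => by simp [abelianizeHom_X]

def abelianizeEquiv (φ : FreeAlgebra R σ ≃ₐ[R] FreeAlgebra R σ) :
    MvPolynomial σ R ≃ₐ[R] MvPolynomial σ R :=
  AlgEquiv.ofAlgHom (abelianizeHom φ) (abelianizeHom φ.symm)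
    (by rw [← abelianizeHom_comp, AlgEquiv.comp_symm, abelianizeHom_id])
    (by rw [← abelianizeHom_comp, AlgEquiv.symm_comp, abelianizeHom_id])

theorem abelianizeEquiv_X (φ : FreeAlgebra R σ ≃ₐ[R] FreeAlgebra R σ) (i : σ) :
    abelianizeEquiv φ (X i) = lift R X (φ (ι R i)) :=
  abelianizeHom_X _ i

theorem abelianizeEquiv_lift (φ : FreeAlgebra R σ ≃ₐ[R] FreeAlgebra R σ) (u : FreeAlgebra R σ) :
    abelianizeEquiv φ (lift R X u) = lift R X (φ u) :=
  DFunLike.congr_fun (abelianizeHom_comp_lift (φ : FreeAlgebra R σ →ₐ[R] FreeAlgebra R σ)) u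

end FreeAlgebra

theorem MvPolynomial.pderiv_algHom_apply {R σ : Type*} [CommSemiring R] [Fintype σ]
    (ψ : MvPolynomial σ R →ₐ[R] MvPolynomial σ R) (j : σ) (F : MvPolynomial σ R) :
    pderiv j (ψ F) = ∑ i, ψ (pderiv i F) * pderiv j (ψ (X i)) := by
  classical
  induction F using MvPolynomial.induction_on with
  | C a => simp
  | add p q hp hq => simp only [map_add, hp, hq, add_mul, Finset.sum_add_distrib]
  | mul_X p i hp =>
    have hX : ∑ k, ψ p * (ψ (pderiv k (X i)) * pderiv j (ψ (X k))) = ψ p * pderiv j (ψ (X i)) := by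
      simp [pderiv_X, Pi.single_apply, apply_ite ψ]
    simp only [map_mul, Derivation.leibniz, smul_eq_mul, map_add, add_mul,
      Finset.sum_add_distrib, hX, hp, Finset.mul_sum, mul_assoc]

section ZLinear

variable {K}

def zPoly : Polynomial K →ₐ[K] MvPolynomial (Fin 3) K :=
  Polynomial.aeval (X 2 : MvPolynomial (Fin 3) K)

def evalXYZero : MvPolynomial (Fin 3) K →ₐ[K] Polynomial K :=
  aeval ![0, 0, (Polynomial.X : Polynomial K)]

theorem evalXYZero_zPoly (g : Polynomial K) : evalXYZero (zPoly g) = g := by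
  rw [zPoly, ← Polynomial.aeval_algHom_apply]
  simp [evalXYZero]

theorem pderiv_zPoly {i : Fin 3} (hi : i ≠ 2) (g : Polynomial K) : pderiv i (zPoly g) = 0 := by
  induction g using Polynomial.induction_on' with
  | add p q hp hq => rw [map_add, map_add, hp, hq, add_zero]
  | monomial n a => simp [zPoly, pderiv_X_of_ne hi.symm]

theorem map_zPoly {F : Type*} [FunLike F (MvPolynomial (Fin 3) K) (MvPolynomial (Fin 3) K)]
    [AlgHomClass F K _ _] (ψ : F) (h : ψ (X 2) = X 2) (g : Polynomial K) :
    ψ (zPoly g) = zPoly g := by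
  rw [zPoly, ← Polynomial.aeval_algHom_apply, h]

theorem zPoly_eq_aeval (p : MvPolynomial (Fin 2) K) :
    zPoly (aeval (fun _ => (Polynomial.X : Polynomial K)) p) =
      aeval (fun _ => (X 2 : MvPolynomial (Fin 3) K)) p := by
  rw [comp_aeval_apply]
  simp [zPoly]

structure IsZLinear (ψ : MvPolynomial (Fin 3) K ≃ₐ[K] MvPolynomial (Fin 3) K)
    (A B C D : Polynomial K) : Prop where
  map_X0 : ψ (X 0) = zPoly A * X 0 + zPoly B * X 1
  map_X1 : ψ (X 1) = zPoly C * X 0 + zPoly D * X 1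
  map_X2 : ψ (X 2) = X 2

namespace IsZLinear

variable {ψ : MvPolynomial (Fin 3) K ≃ₐ[K] MvPolynomial (Fin 3) K} {A B C D : Polynomial K}

theorem evalXYZero_pderiv_apply (h : IsZLinear ψ A B C D) (F : MvPolynomial (Fin 3) K) :
    evalXYZero (pderiv 0 (ψ F)) =
        evalXYZero (ψ (pderiv 0 F)) * A + evalXYZero (ψ (pderiv 1 F)) * C ∧
      evalXYZero (pderiv 1 (ψ F)) =
        evalXYZero (ψ (pderiv 0 F)) * B + evalXYZero (ψ (pderiv 1 F)) * D := by
  have h0 : (0 : Fin 3) ≠ 2 := by decide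
  have h1 : (1 : Fin 3) ≠ 2 := by decide
  constructor <;>
  · rw [← AlgEquiv.coe_toAlgHom, pderiv_algHom_apply]
    simp [Fin.sum_univ_three, h.map_X0, h.map_X1, h.map_X2, pderiv_zPoly h0, pderiv_zPoly h1,
      evalXYZero_zPoly, pderiv_X]

theorem isUnit_det (h : IsZLinear ψ A B C D) : IsUnit (A * D - B * C) := by
  obtain ⟨hxA, hxB⟩ := h.evalXYZero_pderiv_apply (ψ.symm (X 0))
  obtain ⟨hyA, hyB⟩ := h.evalXYZero_pderiv_apply (ψ.symm (X 1))
  simp only [AlgEquiv.apply_symm_apply, pderiv_X_self,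
    pderiv_X_of_ne (by decide : (0 : Fin 3) ≠ 1), pderiv_X_of_ne (by decide : (1 : Fin 3) ≠ 0),
    map_one, map_zero] at hxA hxB hyA hyB
  set x₀ := evalXYZero (ψ (pderiv 0 (ψ.symm (X 0))))
  set x₁ := evalXYZero (ψ (pderiv 1 (ψ.symm (X 0))))
  set y₀ := evalXYZero (ψ (pderiv 0 (ψ.symm (X 1))))
  set y₁ := evalXYZero (ψ (pderiv 1 (ψ.symm (X 1))))
  refine IsUnit.of_mul_eq_one (x₀ * y₁ - x₁ * y₀) ?_
  linear_combination (y₀ * A + y₁ * C) * hxB - (y₀ * B + y₁ * D) * hxA - hyB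

-- The matrix of `ψ * ψ'` is the matrix of `ψ'` times the matrix of `ψ`.
theorem mul (h : IsZLinear ψ A B C D) {ψ' : MvPolynomial (Fin 3) K ≃ₐ[K] MvPolynomial (Fin 3) K}
    {A' B' C' D' : Polynomial K} (h' : IsZLinear ψ' A' B' C' D') :
    IsZLinear (ψ * ψ') (A' * A + B' * C) (A' * B + B' * D) (C' * A + D' * C) (C' * B + D' * D) := by
  refine ⟨?_, ?_, by rw [AlgEquiv.mul_apply, h'.map_X2, h.map_X2]⟩ <;>
  · simp only [AlgEquiv.mul_apply, h'.map_X0, h'.map_X1, map_add, map_mul, map_zPoly ψ h.map_X2,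
      h.map_X0, h.map_X1]
    ring

theorem mem_tame3_of_upperTriangular (h : IsZLinear ψ A B 0 D) : ψ ∈ Tame3 K := by
  have hAD : IsUnit (A * D) := by simpa using h.isUnit_det
  obtain ⟨a, ha, rfl⟩ := Polynomial.isUnit_iff.mp (isUnit_of_mul_isUnit_left hAD)
  obtain ⟨d, hd, rfl⟩ := Polynomial.isUnit_iff.mp (isUnit_of_mul_isUnit_right hAD)
  refine Subgroup.subset_closure
    (Or.inr ⟨ha.unit, hd.unit, 1, X 0 * Polynomial.aeval (X 1) B, 0, 0, ?_, ?_, ?_⟩)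
  · rw [h.map_X0, map_mul, ← Polynomial.aeval_algHom_apply]
    simp [zPoly, mul_comm]
  · simp [h.map_X1, zPoly]
  · simp [h.map_X2]

end IsZLinear

def swapXY : MvPolynomial (Fin 3) K ≃ₐ[K] MvPolynomial (Fin 3) K :=
  renameEquiv K (Equiv.swap 0 1)

theorem isZLinear_swapXY : IsZLinear (swapXY (K := K)) 0 1 1 0 :=
  ⟨by simp [swapXY], by simp [swapXY], by simp [swapXY, Equiv.swap_apply_of_ne_of_ne]⟩

theorem swapXY_mem_tame3 : swapXY ∈ Tame3 K := by
  refine Subgroup.subset_closure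
    (Or.inl ⟨!![0, 1, 0; 1, 0, 0; 0, 0, 1], 0, by simp [Matrix.det_fin_three], ?_⟩)
  intro j
  fin_cases j <;> simp [Fin.sum_univ_three, isZLinear_swapXY.map_X0, isZLinear_swapXY.map_X1,
    isZLinear_swapXY.map_X2]

def transvectionHom (g : Polynomial K) : MvPolynomial (Fin 3) K →ₐ[K] MvPolynomial (Fin 3) K :=
  aeval ![X 0 + zPoly g * X 1, X 1, X 2]

theorem transvectionHom_comp_neg (g : Polynomial K) :
    (transvectionHom g).comp (transvectionHom (-g)) = AlgHom.id K _ := by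
  refine MvPolynomial.algHom_ext fun i => ?_
  fin_cases i <;> simp [transvectionHom, map_zPoly]

def transvection (g : Polynomial K) : MvPolynomial (Fin 3) K ≃ₐ[K] MvPolynomial (Fin 3) K :=
  AlgEquiv.ofAlgHom (transvectionHom g) (transvectionHom (-g)) (transvectionHom_comp_neg g)
    (by simpa using transvectionHom_comp_neg (-g))

theorem isZLinear_transvection (g : Polynomial K) : IsZLinear (transvection g) 1 g 0 1 :=
  ⟨by simp [transvection, transvectionHom], by simp [transvection, transvectionHom],
    by simp [transvection, transvectionHom]⟩

theorem transvection_mem_tame3 (g : Polynomial K) : transvection g ∈ Tame3 K :=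
  (isZLinear_transvection g).mem_tame3_of_upperTriangular

theorem IsZLinear.mem_tame3 {ψ : MvPolynomial (Fin 3) K ≃ₐ[K] MvPolynomial (Fin 3) K}
    {A B C D : Polynomial K} (h : IsZLinear ψ A B C D) : ψ ∈ Tame3 K := by
  induction C using (EuclideanDomain.r_wellFounded (R := Polynomial K)).induction
    generalizing ψ A B D with
  | h C ih =>
  rcases eq_or_ne C 0 with rfl | hC
  · exact h.mem_tame3_of_upperTriangular
  have hstep : IsZLinear (ψ * transvection (-(A / C)) * swapXY) C D (A % C) (B - A / C * D) := by
    convert (h.mul (isZLinear_transvection _)).mul isZLinear_swapXY using 1 <;>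
      simp [EuclideanDomain.mod_eq_sub_mul_div] <;> ring
  have hmem := mul_mem (mul_mem (ih _ (EuclideanDomain.mod_lt A hC) hstep)
    (inv_mem swapXY_mem_tame3)) (inv_mem (transvection_mem_tame3 (-(A / C))))
  simpa using hmem

theorem abel3_linF (p q : MvPolynomial (Fin 2) K) :
    abel3 K (linF K p q) = zPoly (aeval (fun _ => Polynomial.X) p) * X 0 +
      zPoly (aeval (fun _ => Polynomial.X) q) * X 1 := by
  have key (p : MvPolynomial (Fin 2) K) (v : Fin 3) :
      abel3 K (∑ m ∈ p.support, p.coeff m • (ι K 2 ^ m 0 * ι K v * ι K 2 ^ m 1)) =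
        zPoly (aeval (fun _ => Polynomial.X) p) * X v := by
    rw [zPoly_eq_aeval, map_sum, aeval_def, eval₂_eq', Finset.sum_mul]
    refine Finset.sum_congr rfl fun m _ => ?_
    simp only [abel3, map_smul, map_mul, map_pow, lift_ι_apply, Fin.prod_univ_two,
      algebraMap_eq, smul_eq_C_mul]
    ring
  rw [linF, map_add, key, key]

end ZLinear

/-- Drensky–Yu: every `z`-automorphism of `K⟨x,y,z⟩` which is linear in `x` and `y` induces
a tame automorphism of the polynomial algebra `K[x,y,z]`. -/
theorem linear_z_automorphism_induces_tame_automorphism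
    (φ : FreeAlgebra K (Fin 3) ≃ₐ[K] FreeAlgebra K (Fin 3))
    (hz : φ (ι K 2) = ι K 2)
    (p q r s : MvPolynomial (Fin 2) K)
    (hf : φ (ι K 0) = linF K p q) (hg : φ (ι K 1) = linF K r s) :
    ∃ ψ : MvPolynomial (Fin 3) K ≃ₐ[K] MvPolynomial (Fin 3) K,
      (∀ u : FreeAlgebra K (Fin 3), ψ (abel3 K u) = abel3 K (φ u)) ∧
      ψ ∈ Tame3 K := by
  have hX (i : Fin 3) : abelianizeEquiv φ (X i) = abel3 K (φ (ι K i)) := abelianizeEquiv_X φ i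
  have h : IsZLinear (abelianizeEquiv φ)
      (aeval (fun _ => Polynomial.X) p) (aeval (fun _ => Polynomial.X) q)
      (aeval (fun _ => Polynomial.X) r) (aeval (fun _ => Polynomial.X) s) :=
    ⟨by rw [hX, hf, abel3_linF], by rw [hX, hg, abel3_linF], by rw [hX, hz, abel3, lift_ι_apply]⟩
  exact ⟨abelianizeEquiv φ, abelianizeEquiv_lift φ, h.mem_tame3⟩
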